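/- For every graph H with vertex cover number τ(H) ≤ s−1, ex(n, H, M_s) = Θ(n^{α(H)}), where α(H) is the independence number of H; in particular the graph H(n,2s−1,s−1) contains Ω(n^{α(H)}) copies of H. -/

import Mathlib

open SimpleGraph Filter Finset

section Defs

variable {α β γ V : Type*}

/-- `H` has a copy in `G` (an injective edge-preserving map). -/
def Contains (H : SimpleGraph α) (G : SimpleGraph β) : Prop :=
  ∃ f : α ↪ β, ∀ a b, H.Adj a b → G.Adj (f a) (f b)

/-- `G` is `F`-free: it contains no copy of `F`. -/
def Free (F : SimpleGraph γ) (G : SimpleGraph β) : Prop := ¬ Contains F G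

/-- `N(H,G)`: the number of copies of `H` in `G`, i.e. subgraphs of `G` isomorphic to `H`. -/
noncomputable def copyCount (H : SimpleGraph α) (G : SimpleGraph β) : ℕ :=
  Set.ncard {G' : G.Subgraph | Nonempty (H ≃g G'.coe)}

/-- The generalized Turán number `ex(n,H,F)`. -/
noncomputable def exCount {α γ : Type*} (n : ℕ) (H : SimpleGraph α) (F : SimpleGraph γ) : ℕ :=
  sSup {N | ∃ G : SimpleGraph (Fin n), _root_.Free F G ∧ N = _root_.copyCount H G}

/-- The Turán number `ex(n,F)`. -/
noncomputable def exEdge {γ : Type*} (n : ℕ) (F : SimpleGraph γ) : ℕ :=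
  sSup {N | ∃ G : SimpleGraph (Fin n), _root_.Free F G ∧ N = G.edgeSet.ncard}

/-- The matching `M_t` with `t` independent edges. -/
def matchingGraph (t : ℕ) : SimpleGraph (Fin t × Fin 2) :=
  SimpleGraph.fromRel (fun a b => a.1 = b.1)

/-- Disjoint union of two graphs. -/
def disjUnion (G : SimpleGraph α) (H : SimpleGraph β) : SimpleGraph (α ⊕ β) :=
  SimpleGraph.fromRel (fun x y =>
    (∃ a b, x = Sum.inl a ∧ y = Sum.inl b ∧ G.Adj a b) ∨
    (∃ a b, x = Sum.inr a ∧ y = Sum.inr b ∧ H.Adj a b))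

/-- `a` vertex-disjoint copies of the clique `K_m`. -/
def multiClique (a m : ℕ) : SimpleGraph (Fin a × Fin m) :=
  SimpleGraph.fromRel (fun x y => x.1 = y.1)

/-- `H(n,2a+1,a)`: a clique on the first `a` vertices completely joined to the
remaining `n-a` independent vertices. -/
def splitGraph (n a : ℕ) : SimpleGraph (Fin n) :=
  SimpleGraph.fromRel (fun x y => (x : ℕ) < a)

/-- Degree of a vertex. -/
noncomputable def deg (G : SimpleGraph V) (v : V) : ℕ := (G.neighborSet v).ncard

end Defs

/-- The vertex cover number `τ(H)`. -/
noncomputable def coverNumber {α : Type*} (H : SimpleGraph α) : ℕ :=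
  sInf {k | ∃ C : Finset α, C.card = k ∧ ∀ e ∈ H.edgeSet, ∃ v ∈ C, v ∈ e}


/-- The independence number `α(H)`. -/
noncomputable def indepNumber {α : Type*} (H : SimpleGraph α) : ℕ :=
  sSup {k | ∃ S : Finset α, S.card = k ∧ ∀ x ∈ S, ∀ y ∈ S, ¬ H.Adj x y}


section Aux
attribute [local instance] Classical.propDecidable
variable {α β : Type*}

lemma subgraphFinite {V : Type*} [Finite V] (G : SimpleGraph V) : Finite G.Subgraph := by
  have : Finite (Set V × (V → V → Prop)) := by
    have : Finite Prop := Finite.of_equiv Bool Equiv.propEquivBool.symm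
    infer_instance
  apply Finite.of_injective (fun G' : G.Subgraph => (G'.verts, G'.Adj))
  intro x y h
  exact SimpleGraph.Subgraph.ext (congrArg Prod.fst h) (congrArg Prod.snd h)

lemma matching_adj {t : ℕ} {x y : Fin t × Fin 2} :
    (matchingGraph t).Adj x y ↔ x ≠ y ∧ x.1 = y.1 := by
  simp only [matchingGraph, fromRel_adj]
  constructor
  · rintro ⟨h1, h2 | h2⟩ <;> exact ⟨h1, by omega⟩
  · rintro ⟨h1, h2⟩; exact ⟨h1, Or.inl h2⟩

lemma split_adj {n a : ℕ} {x y : Fin n} :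
    (splitGraph n a).Adj x y ↔ x ≠ y ∧ ((x : ℕ) < a ∨ (y : ℕ) < a) := by
  simp [splitGraph, fromRel_adj]

/-- splitGraph n (s-1) is M_s-free. -/
lemma split_free {n s : ℕ} (hs : 1 ≤ s) : _root_.Free (matchingGraph s) (splitGraph n (s - 1)) := by
  rintro ⟨f, hf⟩
  -- each pair (i,0),(i,1) gives an edge, so one endpoint is < s-1
  have key : ∀ i : Fin s, ∃ x : Fin n, x ∈ Set.range f ∧ (x : ℕ) < s - 1 ∧
      (x = f (i,0) ∨ x = f (i,1)) := by
    intro i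
    have hadj : (matchingGraph s).Adj (i, 0) (i, 1) := by
      rw [matching_adj]; exact ⟨by simp, rfl⟩
    have := hf _ _ hadj
    rw [split_adj] at this
    rcases this.2 with h | h
    · exact ⟨f (i,0), ⟨_, rfl⟩, h, Or.inl rfl⟩
    · exact ⟨f (i,1), ⟨_, rfl⟩, h, Or.inr rfl⟩
  choose g hg1 hg2 hg3 using key
  have ginj : Function.Injective g := by
    intro i j hij
    rcases hg3 i with h1 | h1 <;> rcases hg3 j with h2 | h2 <;>
    · rw [h1, h2] at hij
      have := congrArg Prod.fst (f.injective hij)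
      simpa using this
  have : Fintype.card (Fin s) ≤ Fintype.card (Fin (s-1)) := by
    apply Fintype.card_le_of_injective (fun i => ⟨(g i : ℕ), hg2 i⟩)
    intro i j h
    apply ginj
    have : ((g i : ℕ)) = ((g j : ℕ)) := by simpa using congrArg Fin.val h
    exact Fin.val_injective this
  simp at this; omega


section GallaiSec
variable {α : Type*} [Fintype α] (H : SimpleGraph α)

lemma indep_bddAbove : BddAbove {k | ∃ S : Finset α, S.card = k ∧ ∀ x ∈ S, ∀ y ∈ S, ¬ H.Adj x y} := by
  refine ⟨Fintype.card α, ?_⟩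
  rintro k ⟨S, rfl, -⟩
  exact S.card_le_univ.trans_eq (by simp)

lemma indep_le_card {S : Finset α} (hS : ∀ x ∈ S, ∀ y ∈ S, ¬ H.Adj x y) :
    S.card ≤ indepNumber H := le_csSup (indep_bddAbove H) ⟨S, rfl, hS⟩

/-- there is a minimum cover -/
lemma exists_min_cover : ∃ C : Finset α, C.card = coverNumber H ∧
    ∀ e ∈ H.edgeSet, ∃ v ∈ C, v ∈ e := by
  have hne : {k | ∃ C : Finset α, C.card = k ∧ ∀ e ∈ H.edgeSet, ∃ v ∈ C, v ∈ e}.Nonempty := by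
    refine ⟨(univ : Finset α).card, univ, rfl, ?_⟩
    intro e he
    induction e with
    | h x y => exact ⟨x, mem_univ x, Sym2.mem_mk_left x y⟩
  obtain ⟨C, hC, hcov⟩ := Nat.sInf_mem hne
  exact ⟨C, hC, hcov⟩

/-- Gallai: α(H) = |V| - τ(H), and τ ≤ |V|. -/
lemma gallai : indepNumber H = Fintype.card α - coverNumber H ∧ coverNumber H ≤ Fintype.card α := by
  obtain ⟨C, hCcard, hCcov⟩ := exists_min_cover H
  have hτ : coverNumber H ≤ Fintype.card α := by
    rw [← hCcard]; exact C.card_le_univ.trans_eq (by simp)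
  have h1 : Fintype.card α - coverNumber H ≤ indepNumber H := by
    have hind : ∀ x ∈ (univ \ C), ∀ y ∈ (univ \ C), ¬ H.Adj x y := by
      intro x hx y hy hadj
      obtain ⟨v, hvC, hve⟩ := hCcov s(x,y) hadj
      rcases Sym2.mem_iff.1 hve with rfl | rfl
      · exact (mem_sdiff.1 hx).2 hvC
      · exact (mem_sdiff.1 hy).2 hvC
    have := indep_le_card H hind
    rwa [card_sdiff_of_subset (subset_univ C), card_univ, hCcard] at this
  have h2 : indepNumber H ≤ Fintype.card α - coverNumber H := by
    have hmem := Nat.sSup_mem (s := {k | ∃ S : Finset α, S.card = k ∧ ∀ x ∈ S, ∀ y ∈ S, ¬ H.Adj x y})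
      ⟨0, ∅, by simp⟩ (indep_bddAbove H)
    obtain ⟨S, hScard, hSind⟩ := hmem
    have hdef : indepNumber H = sSup {k | ∃ S : Finset α, S.card = k ∧ ∀ x ∈ S, ∀ y ∈ S, ¬ H.Adj x y} := rfl
    have hcov : ∀ e ∈ H.edgeSet, ∃ v ∈ univ \ S, v ∈ e := by
      intro e he
      induction e with
      | h x y =>
        by_cases hx : x ∈ S
        · by_cases hy : y ∈ S
          · exact absurd he (hSind x hx y hy)
          · exact ⟨y, mem_sdiff.2 ⟨mem_univ y, hy⟩, Sym2.mem_mk_right x y⟩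
        · exact ⟨x, mem_sdiff.2 ⟨mem_univ x, hx⟩, Sym2.mem_mk_left x y⟩
    have hτ2 : coverNumber H ≤ (univ \ S).card := Nat.sInf_le ⟨univ \ S, rfl, hcov⟩
    rw [card_sdiff_of_subset (subset_univ S), card_univ] at hτ2
    have hSle : S.card ≤ Fintype.card α := S.card_le_univ.trans_eq (by simp)
    omega
  exact ⟨le_antisymm h2 h1, hτ⟩

end GallaiSec

/-- The subgraph that is the image of an edge-preserving injection. -/
def copyOf (H : SimpleGraph α) (G : SimpleGraph β) (f : α → β)
    (hp : ∀ u v, H.Adj u v → G.Adj (f u) (f v)) : G.Subgraph where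
  verts := Set.range f
  Adj x y := ∃ u v, H.Adj u v ∧ f u = x ∧ f v = y
  adj_sub := by rintro x y ⟨u, v, huv, rfl, rfl⟩; exact hp u v huv
  edge_vert := by rintro x y ⟨u, v, huv, rfl, rfl⟩; exact ⟨u, rfl⟩
  symm := ⟨by rintro x y ⟨u, v, huv, rfl, rfl⟩; exact ⟨v, u, huv.symm, rfl, rfl⟩⟩

noncomputable def copyOfIso (H : SimpleGraph α) (G : SimpleGraph β) (f : α → β)
    (hf : Function.Injective f) (hp : ∀ u v, H.Adj u v → G.Adj (f u) (f v)) :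
    H ≃g (copyOf H G f hp).coe where
  toEquiv := Equiv.ofInjective f hf
  map_rel_iff' := by
    intro u v
    show (copyOf H G f hp).Adj (f u) (f v) ↔ H.Adj u v
    constructor
    · rintro ⟨u', v', h, hu, hv⟩
      rwa [hf hu, hf hv] at h
    · intro h; exact ⟨u, v, h, rfl, rfl⟩

/-- Any subgraph isomorphic to H is the copyOf its embedding. -/
lemma subgraph_eq_copyOf (H : SimpleGraph α) (G : SimpleGraph β) (G' : G.Subgraph)
    (e : H ≃g G'.coe) :
    ∀ (hp : ∀ u v, H.Adj u v → G.Adj ((e u : G'.verts) : β) ((e v : G'.verts) : β)),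
    G' = copyOf H G (fun x => ((e x : G'.verts) : β)) hp := by
  intro hp
  apply SimpleGraph.Subgraph.ext
  · ext x
    constructor
    · intro hx
      exact ⟨e.symm ⟨x, hx⟩, by simp⟩
    · rintro ⟨u, rfl⟩; exact (e u).2
  · ext x y
    constructor
    · intro hxy
      have hx : x ∈ G'.verts := G'.edge_vert hxy
      have hy : y ∈ G'.verts := G'.edge_vert hxy.symm
      refine ⟨e.symm ⟨x, hx⟩, e.symm ⟨y, hy⟩, ?_, by simp, by simp⟩
      have : G'.coe.Adj ⟨x, hx⟩ ⟨y, hy⟩ := hxy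
      rw [← e.apply_symm_apply ⟨x, hx⟩, ← e.apply_symm_apply ⟨y, hy⟩] at this
      exact e.map_rel_iff.1 this
    · rintro ⟨u, v, huv, rfl, rfl⟩
      have : G'.coe.Adj (e u) (e v) := e.map_rel_iff.2 huv
      exact this


lemma copyOf_verts (H : SimpleGraph α) (G : SimpleGraph β) (f : α → β) (hp) :
    (copyOf H G f hp).verts = Set.range f := rfl

lemma copyOf_congr {H : SimpleGraph α} {G : SimpleGraph β} {f g : α → β} {hp hq}
    (h : f = g) : copyOf H G f hp = copyOf H G g hq := by subst h; rfl


section CW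
variable {α : Type*} [Fintype α]
/-- key construction: a copy of H in splitGraph with prescribed independent part -/
lemma copy_with_indep (H : SimpleGraph α) (s n : ℕ) (hs : 1 ≤ s)
    (hτ : coverNumber H ≤ s - 1) (hn : s - 1 ≤ n)
    (S : Finset (Fin n)) (hS1 : ∀ x ∈ S, s - 1 ≤ (x : ℕ)) (hS2 : S.card = indepNumber H) :
    ∃ G' : (splitGraph n (s-1)).Subgraph, Nonempty (H ≃g G'.coe) ∧
      G'.verts ∩ {x : Fin n | s - 1 ≤ (x : ℕ)} = ↑S := by
  classical
  obtain ⟨C, hCcard, hCcov⟩ := exists_min_cover H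
  obtain ⟨hga, hτk⟩ := gallai H
  set I : Finset α := univ \ C with hI
  have hIcard : I.card = indepNumber H := by
    rw [hI, card_sdiff_of_subset (subset_univ C), card_univ, hCcard, hga]
  have hCn : C.card ≤ n := by omega
  -- equivalence between I and S
  have hISc : I.card = S.card := by rw [hIcard, hS2]
  let eI : ↥I ≃ ↥S := I.equivOfCardEq hISc
  let eC : ↥C → Fin n := fun x => Fin.castLE hCn (C.equivFin x)
  have heC : ∀ x, (eC x : ℕ) < s - 1 := fun x => by
    have : ((C.equivFin x : Fin C.card) : ℕ) < C.card := (C.equivFin x).2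
    simpa [eC] using lt_of_lt_of_le this (by omega)
  let f : α → Fin n := fun x => if hx : x ∈ C then eC ⟨x, hx⟩
    else ((eI ⟨x, by simp [hI, hx]⟩ : ↥S) : Fin n)
  have hfC : ∀ x (hx : x ∈ C), f x = eC ⟨x, hx⟩ := fun x hx => dif_pos hx
  have hfI : ∀ x (hx : x ∉ C), f x ∈ S := fun x hx => by
    simp only [f, dif_neg hx]; exact (eI _).2
  have hflt : ∀ x, x ∈ C → (f x : ℕ) < s - 1 := fun x hx => by rw [hfC x hx]; exact heC _
  have hfge : ∀ x, x ∉ C → s - 1 ≤ (f x : ℕ) := fun x hx => hS1 _ (hfI x hx)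
  have hfinj : Function.Injective f := by
    intro x y hxy
    by_cases hx : x ∈ C <;> by_cases hy : y ∈ C
    · rw [hfC x hx, hfC y hy] at hxy
      have := (C.equivFin).injective (Fin.castLE_injective hCn hxy)
      exact congrArg Subtype.val this
    · exfalso
      have h1 := hflt x hx; have h2 := hfge y hy
      have h3 := congrArg Fin.val hxy; omega
    · exfalso
      have h1 := hfge x hx; have h2 := hflt y hy
      have h3 := congrArg Fin.val hxy; omega
    · simp only [f, dif_neg hx, dif_neg hy] at hxy
      have := eI.injective (Subtype.val_injective hxy)
      exact congrArg Subtype.val (Subtype.val_injective (congrArg Subtype.val this))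
  have hpres : ∀ u v, H.Adj u v → (splitGraph n (s-1)).Adj (f u) (f v) := by
    intro u v huv
    rw [split_adj]
    refine ⟨fun h => huv.ne (hfinj h), ?_⟩
    obtain ⟨w, hwC, hwe⟩ := hCcov s(u,v) huv
    rcases Sym2.mem_iff.1 hwe with rfl | rfl
    · exact Or.inl (hflt _ hwC)
    · exact Or.inr (hflt _ hwC)
  refine ⟨copyOf H _ f hpres, ⟨copyOfIso H _ f hfinj hpres⟩, ?_⟩
  rw [copyOf_verts]
  ext y
  simp only [Set.mem_inter_iff, Set.mem_range, Set.mem_setOf_eq, Finset.coe_sort_coe,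
    Finset.mem_coe]
  constructor
  · rintro ⟨⟨x, rfl⟩, hge⟩
    by_cases hx : x ∈ C
    · exact absurd hge (by have := hflt x hx; omega)
    · exact hfI x hx
  · intro hyS
    refine ⟨⟨((eI.symm ⟨y, hyS⟩ : ↥I) : α), ?_⟩, hS1 y hyS⟩
    have hxI : ((eI.symm ⟨y, hyS⟩ : ↥I) : α) ∈ I := (eI.symm ⟨y, hyS⟩).2
    have hxC : ((eI.symm ⟨y, hyS⟩ : ↥I) : α) ∉ C := by
      have h2 : ((eI.symm ⟨y, hyS⟩ : ↥I) : α) ∈ univ \ C := hxI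
      exact (mem_sdiff.1 h2).2
    simp only [f, dif_neg hxC]
    have : (⟨((eI.symm ⟨y, hyS⟩ : ↥I) : α), by simp [hI, hxC]⟩ : ↥I) = eI.symm ⟨y, hyS⟩ :=
      Subtype.ext rfl
    rw [this, eI.apply_symm_apply]

lemma split_count_lower (H : SimpleGraph α) (s n : ℕ) (hs : 1 ≤ s)
    (hτ : coverNumber H ≤ s - 1) (hn : s - 1 ≤ n) :
    (n - (s-1)).choose (indepNumber H) ≤ _root_.copyCount H (splitGraph n (s-1)) := by
  classical
  set a := indepNumber H with ha
  set I' : Finset (Fin n) := univ.filter (fun x => s - 1 ≤ (x : ℕ)) with hI'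
  have hI'card : n - (s-1) ≤ I'.card := by
    have huniv : (univ : Finset (Fin (n - (s-1)))).card = n - (s-1) := by simp
    rw [← huniv]
    apply Finset.card_le_card_of_injOn (fun j : Fin (n - (s-1)) => (⟨s - 1 + (j : ℕ), by omega⟩ : Fin n))
    · intro j _; simp only [hI', mem_coe, mem_filter, mem_univ, true_and]; omega
    · intro i _ j _ h
      have := congrArg Fin.val h
      simp only at this
      exact Fin.val_injective (by omega)
  have hfin : Finite ((splitGraph n (s-1)).Subgraph) := subgraphFinite _
  set copies := {G' : (splitGraph n (s-1)).Subgraph | Nonempty (H ≃g G'.coe)} with hcopies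
  have key : ∀ S : {S // S ∈ powersetCard a I'}, ∃ G' : copies,
      (G' : (splitGraph n (s-1)).Subgraph).verts ∩ {x : Fin n | s - 1 ≤ (x : ℕ)} = ↑S.val := by
    rintro ⟨S, hS⟩
    rw [mem_powersetCard] at hS
    obtain ⟨G', hG'1, hG'2⟩ := copy_with_indep H s n hs hτ hn S
      (fun x hx => by have := hS.1 hx; simpa [hI'] using this) hS.2
    exact ⟨⟨G', hG'1⟩, hG'2⟩
  choose Ψ hΨ using key
  have hinj : Function.Injective Ψ := by
    intro S1 S2 h
    apply Subtype.ext
    apply Finset.coe_injective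
    rw [← hΨ S1, ← hΨ S2, h]
  have hcard := Nat.card_le_card_of_injective Ψ hinj
  have h1 : Nat.card {S // S ∈ powersetCard a I'} = I'.card.choose a := by
    rw [Nat.card_eq_fintype_card, Fintype.card_coe, Finset.card_powersetCard]
  have h2 : _root_.copyCount H (splitGraph n (s-1)) = Nat.card copies := by
    rw [_root_.copyCount, Nat.card_coe_set_eq]
  rw [h2]
  calc (n - (s-1)).choose a ≤ I'.card.choose a := Nat.choose_le_choose a hI'card
    _ = Nat.card {S // S ∈ powersetCard a I'} := h1.symm
    _ ≤ Nat.card copies := hcard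

end CW

lemma fin2_cases {j : Fin 2} (h : j ≠ 0) : j = 1 := by omega

lemma cover_of_free : ∀ (s : ℕ) {n : ℕ} (G : SimpleGraph (Fin n)),
    _root_.Free (matchingGraph (s+1)) G →
    ∃ W : Finset (Fin n), W.card ≤ 2 * s ∧ ∀ x y, G.Adj x y → x ∈ W ∨ y ∈ W := by
  intro s
  induction s with
  | zero =>
    intro n G hfree
    refine ⟨∅, by simp, ?_⟩
    intro x y hxy
    exfalso; apply hfree
    refine ⟨⟨fun p => if p.2 = 0 then x else y, ?_⟩, ?_⟩
    · intro p q hpq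
      have hp1 : p.1 = q.1 := Fin.val_injective (by omega)
      by_cases hp : p.2 = 0 <;> by_cases hq : q.2 = 0 <;>
        simp only [hp, hq, if_pos, if_neg, if_true] at hpq ⊢ <;>
        first
          | (exact Prod.ext hp1 (hp.trans hq.symm))
          | (exact absurd hpq hxy.ne ) | (exact absurd hpq.symm hxy.ne)
          | (exact Prod.ext hp1 ((fin2_cases hp).trans (fin2_cases hq).symm))
    · intro p q hpq
      rw [matching_adj] at hpq
      obtain ⟨hne, hfst⟩ := hpq
      have hsnd : p.2 ≠ q.2 := fun h => hne (Prod.ext hfst h)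
      show G.Adj (if p.2 = 0 then x else y) (if q.2 = 0 then x else y)
      by_cases hp : p.2 = 0
      · have hq2 : q.2 ≠ 0 := fun h => hsnd (hp.trans h.symm)
        rw [if_pos hp, if_neg hq2]
        exact hxy
      · rw [if_neg hp, if_pos (by by_contra hq; exact hsnd ((fin2_cases hp).trans (fin2_cases hq).symm))]
        exact hxy.symm
  | succ s IH =>
    intro n G hfree
    by_cases hE : ∃ u v, G.Adj u v
    · obtain ⟨u, v, huv⟩ := hE
      set G' : SimpleGraph (Fin n) :=
        { Adj := fun x y => G.Adj x y ∧ x ≠ u ∧ x ≠ v ∧ y ≠ u ∧ y ≠ v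
          symm := ⟨by rintro x y ⟨h1, h2, h3, h4, h5⟩; exact ⟨h1.symm, h4, h5, h2, h3⟩⟩
          loopless := ⟨fun x h => G.loopless.1 x h.1⟩ } with hG'
      have hfree' : _root_.Free (matchingGraph (s+1)) G' := by
        rintro ⟨f', hf'⟩
        apply hfree
        have havoid : ∀ p : Fin (s+1) × Fin 2, f' p ≠ u ∧ f' p ≠ v := by
          intro p
          have hadj : (matchingGraph (s+1)).Adj p (p.1, if p.2 = 0 then 1 else 0) := by
            rw [matching_adj]
            refine ⟨fun h => ?_, rfl⟩
            have := congrArg Prod.snd h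
            by_cases hp : p.2 = 0 <;> simp [hp] at this <;> omega
          have := hf' _ _ hadj
          exact ⟨this.2.1, this.2.2.1⟩
        refine ⟨⟨fun p => if h : (p.1 : ℕ) < s+1 then f' (⟨p.1, h⟩, p.2)
          else (if p.2 = 0 then u else v), ?_⟩, ?_⟩
        · intro p q hpq
          dsimp only at hpq
          by_cases hp : (p.1 : ℕ) < s+1 <;> by_cases hq : (q.1 : ℕ) < s+1
          · rw [dif_pos hp, dif_pos hq] at hpq
            have := f'.injective hpq
            have h1 := congrArg Prod.fst this
            have h2 := congrArg Prod.snd this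
            simp only at h1 h2
            have h3 : (p.1 : ℕ) = (q.1 : ℕ) := Fin.mk_eq_mk.mp h1
            exact Prod.ext (Fin.val_injective h3) h2
          · rw [dif_pos hp, dif_neg hq] at hpq
            exfalso
            rcases (havoid (⟨p.1, hp⟩, p.2)) with ⟨h1, h2⟩
            by_cases hq2 : q.2 = 0
            · rw [if_pos hq2] at hpq; exact h1 hpq
            · rw [if_neg hq2] at hpq; exact h2 hpq
          · rw [dif_neg hp, dif_pos hq] at hpq
            exfalso
            rcases (havoid (⟨q.1, hq⟩, q.2)) with ⟨h1, h2⟩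
            by_cases hp2 : p.2 = 0
            · rw [if_pos hp2] at hpq; exact h1 hpq.symm
            · rw [if_neg hp2] at hpq; exact h2 hpq.symm
          · rw [dif_neg hp, dif_neg hq] at hpq
            have hfst : p.1 = q.1 := by
              have hpv : (p.1 : ℕ) < s + 2 := p.1.2
              have hqv : (q.1 : ℕ) < s + 2 := q.1.2
              exact Fin.val_injective (by omega)
            by_cases hp2 : p.2 = 0 <;> by_cases hq2 : q.2 = 0
            · exact Prod.ext hfst (hp2.trans hq2.symm)
            · rw [if_pos hp2, if_neg hq2] at hpq; exact absurd hpq huv.ne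
            · rw [if_neg hp2, if_pos hq2] at hpq; exact absurd hpq.symm huv.ne
            · exact Prod.ext hfst ((fin2_cases hp2).trans (fin2_cases hq2).symm)
        · intro p q hpq
          rw [matching_adj] at hpq
          obtain ⟨hne, hfst⟩ := hpq
          have hsnd : p.2 ≠ q.2 := fun h => hne (Prod.ext hfst h)
          show G.Adj (if h : (p.1 : ℕ) < s+1 then f' (⟨p.1, h⟩, p.2) else (if p.2 = 0 then u else v))
            (if h : (q.1 : ℕ) < s+1 then f' (⟨q.1, h⟩, q.2) else (if q.2 = 0 then u else v))
          by_cases hp : (p.1 : ℕ) < s+1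
          · have hq : (q.1 : ℕ) < s+1 := by rw [← hfst]; exact hp
            rw [dif_pos hp, dif_pos hq]
            have hadj : (matchingGraph (s+1)).Adj (⟨p.1, hp⟩, p.2) (⟨q.1, hq⟩, q.2) := by
              rw [matching_adj]
              refine ⟨fun h => hsnd (by simpa using congrArg Prod.snd h), ?_⟩
              exact Fin.mk_eq_mk.mpr (congrArg Fin.val hfst)
            exact (hf' _ _ hadj).1
          · have hq : ¬ (q.1 : ℕ) < s+1 := by rw [← hfst]; exact hp
            rw [dif_neg hp, dif_neg hq]
            by_cases hp2 : p.2 = 0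
            · rw [if_pos hp2, if_neg (hp2 ▸ hsnd.symm : q.2 ≠ 0)]; exact huv
            · rw [if_neg hp2, if_pos ?_]
              · exact huv.symm
              · by_contra hq2
                exact hsnd ((fin2_cases hp2).trans (fin2_cases hq2).symm)
      obtain ⟨W', hW'card, hW'cov⟩ := IH G' hfree'
      refine ⟨insert u (insert v W'), ?_, ?_⟩
      · calc (insert u (insert v W')).card ≤ (insert v W').card + 1 := card_insert_le _ _
          _ ≤ W'.card + 1 + 1 := by have := card_insert_le v W'; omega
          _ ≤ 2 * (s + 1) := by omega
      · intro x y hxy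
        by_cases hx : x = u ∨ x = v
        · left
          rcases hx with rfl | rfl
          · exact mem_insert_self _ _
          · exact mem_insert_of_mem (mem_insert_self _ _)
        · by_cases hy : y = u ∨ y = v
          · right
            rcases hy with rfl | rfl
            · exact mem_insert_self _ _
            · exact mem_insert_of_mem (mem_insert_self _ _)
          · push_neg at hx hy
            have : G'.Adj x y := ⟨hxy, hx.1, hx.2, hy.1, hy.2⟩
            rcases hW'cov x y this with h | h
            · exact Or.inl (mem_insert_of_mem (mem_insert_of_mem h))
            · exact Or.inr (mem_insert_of_mem (mem_insert_of_mem h))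
    · push_neg at hE
      exact ⟨∅, by simp, fun x y hxy => absurd hxy (hE x y)⟩


section CU
variable {α : Type*} [Fintype α]
lemma count_upper (H : SimpleGraph α) (s n : ℕ) (hs : 1 ≤ s) (hn : 1 ≤ n)
    (G : SimpleGraph (Fin n)) (hfree : _root_.Free (matchingGraph s) G) :
    _root_.copyCount H G ≤ 2 ^ (Fintype.card α) * ((2*s) ^ (Fintype.card α) * n ^ (indepNumber H)) := by
  classical
  set k := Fintype.card α with hk
  set a := indepNumber H with ha
  have hs' : s - 1 + 1 = s := by omega
  obtain ⟨W, hWcard, hWcov⟩ := cover_of_free (s-1) G (by rwa [hs'])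
  have hfin : Finite G.Subgraph := subgraphFinite G
  set copies := {G' : G.Subgraph | Nonempty (H ≃g G'.coe)} with hcopies
  set E : Finset (α → Fin n) := univ.filter
    (fun f => Function.Injective f ∧ ∀ u v, H.Adj u v → G.Adj (f u) (f v)) with hE
  -- step 1 : copyCount ≤ E.card
  have step1 : _root_.copyCount H G ≤ E.card := by
    have hiso : ∀ G' : ↥copies, Nonempty (H ≃g ((G' : G.Subgraph)).coe) := fun G' => G'.2
    have e := fun G' => Classical.choice (hiso G')
    set fOf : ↥copies → (α → Fin n) := fun G' => fun x => ((e G' x : (G' : G.Subgraph).verts) : Fin n)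
      with hfOf
    have hmem : ∀ G', fOf G' ∈ E := by
      intro G'
      rw [hE, mem_filter]
      refine ⟨mem_univ _, ?_, ?_⟩
      · intro x y hxy
        exact (e G').injective (Subtype.val_injective hxy)
      · intro u v huv
        have : (G' : G.Subgraph).coe.Adj (e G' u) (e G' v) := (e G').map_rel_iff.2 huv
        exact this.adj_sub
    have hinj : Function.Injective (fun G' => (⟨fOf G', hmem G'⟩ : {f // f ∈ E})) := by
      intro G1 G2 h
      have h' : fOf G1 = fOf G2 := congrArg Subtype.val h
      apply Subtype.ext
      have e1 := subgraph_eq_copyOf H G _ (e G1)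
        (fun u v huv => ((e G1).map_rel_iff.2 huv).adj_sub)
      have e2 := subgraph_eq_copyOf H G _ (e G2)
        (fun u v huv => ((e G2).map_rel_iff.2 huv).adj_sub)
      rw [e1, e2]
      exact copyOf_congr h'
    have hcc : _root_.copyCount H G = Nat.card ↥copies := by
      rw [_root_.copyCount, Nat.card_coe_set_eq]
    rw [hcc]
    calc Nat.card ↥copies ≤ Nat.card {f // f ∈ E} := Nat.card_le_card_of_injective _ hinj
      _ = E.card := by rw [Nat.card_eq_fintype_card, Fintype.card_coe]
  -- step 2 : fiberwise counting
  set 𝒮 : Finset (Finset α) := univ.filter (fun S => S.card ≤ a) with h𝒮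
  set SOf : (α → Fin n) → Finset α := fun f => univ.filter (fun x => f x ∉ W) with hSOf
  have hSOfmem : ∀ f ∈ E, SOf f ∈ 𝒮 := by
    intro f hf
    rw [hE, mem_filter] at hf
    obtain ⟨-, hfinj, hfpres⟩ := hf
    rw [h𝒮, mem_filter]
    refine ⟨mem_univ _, ?_⟩
    apply indep_le_card H
    intro x hx y hy hadj
    rw [hSOf, mem_filter] at hx hy
    rcases hWcov _ _ (hfpres x y hadj) with h | h
    · exact hx.2 h
    · exact hy.2 h
  have step2 : E.card = ∑ S ∈ 𝒮, (E.filter (fun f => SOf f = S)).card :=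
    card_eq_sum_card_fiberwise hSOfmem
  -- step 3 : bound each fiber
  have step3 : ∀ S ∈ 𝒮, (E.filter (fun f => SOf f = S)).card ≤ (2*s)^k * n^a := by
    intro S hS
    rw [h𝒮, mem_filter] at hS
    have hScard : S.card ≤ a := hS.2
    have hle : (E.filter (fun f => SOf f = S)).card
        ≤ (univ : Finset ((↥S → Fin n) × (α → Option ↥W))).card := by
      apply card_le_card_of_injOn
        (fun f => (fun x => f x.val, fun x => if h : f x ∈ W then some ⟨f x, h⟩ else none))
      · intro f _; exact mem_univ _
      · intro f1 hf1 f2 hf2 h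
        rw [mem_coe, mem_filter] at hf1 hf2
        have hfst := congrArg Prod.fst h
        have hsnd := congrArg Prod.snd h
        simp only at hfst hsnd
        funext x
        by_cases hx : x ∈ S
        · exact congrFun hfst ⟨x, hx⟩
        · have h1 : f1 x ∈ W := by
            have := hf1.2 ▸ hx
            rw [hSOf, mem_filter] at this
            push_neg at this
            exact this (mem_univ x)
          have h2 : f2 x ∈ W := by
            have := hf2.2 ▸ hx
            rw [hSOf, mem_filter] at this
            push_neg at this
            exact this (mem_univ x)
          have := congrFun hsnd x
          rw [dif_pos h1, dif_pos h2] at this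
          exact congrArg Subtype.val (Option.some_injective _ this)
    refine hle.trans ?_
    rw [card_univ, Fintype.card_prod, Fintype.card_fun, Fintype.card_fun,
      Fintype.card_coe, Fintype.card_option, Fintype.card_coe, Fintype.card_fin]
    have h1 : n ^ S.card ≤ n ^ a := Nat.pow_le_pow_right hn hScard
    have h2 : (W.card + 1) ^ k ≤ (2*s) ^ k := Nat.pow_le_pow_left (by omega) k
    calc n ^ S.card * (W.card + 1) ^ k ≤ n ^ a * (2*s)^k := Nat.mul_le_mul h1 h2
      _ = (2*s)^k * n^a := Nat.mul_comm _ _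
  -- combine
  have step4 : ∑ S ∈ 𝒮, (E.filter (fun f => SOf f = S)).card ≤ 𝒮.card * ((2*s)^k * n^a) := by
    have := Finset.sum_le_card_nsmul 𝒮 _ ((2*s)^k * n^a) step3
    simpa [smul_eq_mul] using this
  have h𝒮card : 𝒮.card ≤ 2 ^ k := by
    calc 𝒮.card ≤ (univ : Finset (Finset α)).card := card_le_card (by rw [h𝒮]; exact filter_subset _ _)
      _ = 2 ^ k := by rw [card_univ, Fintype.card_finset]
  calc _root_.copyCount H G ≤ E.card := step1
    _ = _ := step2
    _ ≤ 𝒮.card * ((2*s)^k * n^a) := step4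
    _ ≤ 2^k * ((2*s)^k * n^a) := Nat.mul_le_mul_right _ h𝒮card

end CU
end Aux

/-- If `τ(H) ≤ s - 1` then `ex(n, H, M_s) = Θ(n^{α(H)})`, and `H(n,2s-1,s-1)`
contains `Ω(n^{α(H)})` copies of `H`. -/
theorem stmt17 {α : Type*} [Fintype α] (H : SimpleGraph α) (s : ℕ) (hs : 1 ≤ s)
    (hτ : coverNumber H ≤ s - 1) :
    ∃ c₁ c₂ : ℝ, 0 < c₁ ∧ 0 < c₂ ∧ ∀ᶠ n : ℕ in atTop,
      c₁ * (n : ℝ) ^ indepNumber H ≤ (_root_.copyCount H (splitGraph n (s - 1)) : ℝ) ∧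
      c₁ * (n : ℝ) ^ indepNumber H ≤ (exCount n H (matchingGraph s) : ℝ) ∧
      (exCount n H (matchingGraph s) : ℝ) ≤ c₂ * (n : ℝ) ^ indepNumber H := by
  classical
  set k := Fintype.card α with hk
  set a := indepNumber H with ha
  refine ⟨1 / ((2:ℝ)^a * a.factorial), 2^k * (2*(s:ℝ))^k, by positivity, by positivity, ?_⟩
  filter_upwards [eventually_ge_atTop (2*(s + a + 1))] with n hn
  have hn1 : 1 ≤ n := by omega
  have hsn : s - 1 ≤ n := by omega
  have L1 : (n - (s-1)).choose a ≤ _root_.copyCount H (splitGraph n (s-1)) :=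
    split_count_lower H s n hs hτ hsn
  have hnm : n ≤ 2 * (n - (s-1) + 1 - a) := by omega
  have hreal : 1 / ((2:ℝ)^a * a.factorial) * (n:ℝ)^a ≤ ((n - (s-1)).choose a : ℝ) := by
    have h1 := Nat.pow_le_choose (α := ℝ) a (n - (s-1))
    have h2 : (n:ℝ) ≤ 2 * ((n - (s-1) + 1 - a : ℕ) : ℝ) := by exact_mod_cast hnm
    have h3 : (n:ℝ)^a ≤ (2 * ((n - (s-1) + 1 - a : ℕ) : ℝ))^a :=
      pow_le_pow_left₀ (by positivity) h2 a
    have h4 : (2 * ((n - (s-1) + 1 - a : ℕ) : ℝ))^a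
        = 2^a * ((n - (s-1) + 1 - a : ℕ) : ℝ)^a := mul_pow _ _ _
    have hfac : (0:ℝ) < (a.factorial : ℝ) := by exact_mod_cast a.factorial_pos
    calc 1 / ((2:ℝ)^a * a.factorial) * (n:ℝ)^a
        ≤ 1 / ((2:ℝ)^a * a.factorial) * (2^a * ((n - (s-1) + 1 - a : ℕ) : ℝ)^a) := by
          apply mul_le_mul_of_nonneg_left (h3.trans_eq h4)
          positivity
      _ = ((n - (s-1) + 1 - a : ℕ) : ℝ)^a / a.factorial := by
          field_simp
      _ ≤ ((n - (s-1)).choose a : ℝ) := h1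
  have Lsplit : 1 / ((2:ℝ)^a * a.factorial) * (n:ℝ)^a
      ≤ (_root_.copyCount H (splitGraph n (s-1)) : ℝ) :=
    hreal.trans (by exact_mod_cast L1)
  have hAeq : exCount n H (matchingGraph s)
      = sSup {N | ∃ G : SimpleGraph (Fin n), _root_.Free (matchingGraph s) G ∧ N = _root_.copyCount H G} := rfl
  have hbdd : BddAbove {N | ∃ G : SimpleGraph (Fin n), _root_.Free (matchingGraph s) G ∧ N = _root_.copyCount H G} := by
    refine ⟨2^k * ((2*s)^k * n^a), ?_⟩
    rintro N ⟨G, hGf, rfl⟩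
    exact count_upper H s n hs hn1 G hGf
  have hbot : _root_.Free (matchingGraph s) (⊥ : SimpleGraph (Fin n)) := by
    rintro ⟨f, hf⟩
    have hadj : (matchingGraph s).Adj (⟨0, hs⟩, 0) (⟨0, hs⟩, 1) := by
      rw [matching_adj]
      exact ⟨fun h => by have := congrArg Prod.snd h; simp at this, rfl⟩
    exact hf _ _ hadj
  have hne : {N | ∃ G : SimpleGraph (Fin n), _root_.Free (matchingGraph s) G ∧ N = _root_.copyCount H G}.Nonempty :=
    ⟨_, ⊥, hbot, rfl⟩
  have hmem : _root_.copyCount H (splitGraph n (s-1))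
      ∈ {N | ∃ G : SimpleGraph (Fin n), _root_.Free (matchingGraph s) G ∧ N = _root_.copyCount H G} :=
    ⟨_, split_free hs, rfl⟩
  have hle1 : _root_.copyCount H (splitGraph n (s-1)) ≤ exCount n H (matchingGraph s) := by
    rw [hAeq]; exact le_csSup hbdd hmem
  have hle2 : exCount n H (matchingGraph s) ≤ 2^k * ((2*s)^k * n^a) := by
    rw [hAeq]
    apply csSup_le hne
    rintro N ⟨G, hGf, rfl⟩
    exact count_upper H s n hs hn1 G hGf
  refine ⟨Lsplit, Lsplit.trans (by exact_mod_cast hle1), ?_⟩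
  calc (exCount n H (matchingGraph s) : ℝ) ≤ ((2^k * ((2*s)^k * n^a) : ℕ) : ℝ) := by
        exact_mod_cast hle2
    _ = 2^k * (2*(s:ℝ))^k * (n:ℝ)^a := by push_cast; ring
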